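/- arXiv:2506.10388 — 3 statements merged into one kernel-verified Lean document; each statement's English description precedes it below -/
import Mathlib

section
/- Let {S(t) : t ≥ 0} be an asymptotically closed semigroup on a metric space (V,d). Then the following are equivalent: (1) the semigroup has a global attractor A in V; (2) there exists a nonempty bounded absorbing set B ⊆ V such that for every sequence t_k ≥ 0 with t_k → ∞ and every sequence x_k ∈ B, the sequence S(t_k)x_k has a convergent subsequence, and in this case A = Λ^V(B); (3) there exists a nonempty compact set K ⊆ V attracting all bounded subsets of V (i.e., dist^V(S(t)G, K) → 0 as t → ∞ for every bounded G ⊆ V), and in this case A = Λ^V(K). -/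
open Filter Metric Set Topology Bornology
open scoped ENNReal

section Defs

variable {V : Type*} [MetricSpace V]

/-- A semigroup (semiflow) of maps `S t : V → V`, `t ∈ [0,∞)`. -/
def IsSemiflow (S : ℝ → V → V) : Prop :=
  (∀ x : V, S 0 x = x) ∧ ∀ t s : ℝ, 0 ≤ t → 0 ≤ s → ∀ x : V, S t (S s x) = S (t + s) x

/-- One-sided Hausdorff distance `dist^V(G,A) = sup_{x∈G} inf_{y∈A} d(x,y)` (in `ℝ≥0∞`). -/
noncomputable def attrDist (G A : Set V) : ℝ≥0∞ :=
  ⨆ x ∈ G, EMetric.infEdist x A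

/-- The set `A` attracts all bounded subsets of `V`. -/
def AttractsSet (S : ℝ → V → V) (A : Set V) : Prop :=
  ∀ G : Set V, IsBounded G → Tendsto (fun t : ℝ => attrDist (S t '' G) A) atTop (𝓝 0)

/-- A global attractor: nonempty, compact, invariant, attracts all bounded sets. -/
def IsGlobalAttr (S : ℝ → V → V) (A : Set V) : Prop :=
  A.Nonempty ∧ IsCompact A ∧ (∀ t : ℝ, 0 ≤ t → S t '' A = A) ∧ AttractsSet S A

/-- `B` is an absorbing set for the semigroup. -/
def IsAbsorbingSet (S : ℝ → V → V) (B : Set V) : Prop :=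
  ∀ G : Set V, IsBounded G → ∃ tG : ℝ, 0 ≤ tG ∧ ∀ t : ℝ, tG ≤ t → S t '' G ⊆ B

/-- The semigroup is asymptotically closed. -/
def AsympClosed (S : ℝ → V → V) : Prop :=
  ∀ t : ℝ, 0 ≤ t → ∀ tk : ℕ → ℝ, (∀ k, 0 ≤ tk k) → Tendsto tk atTop atTop →
    ∀ xk : ℕ → V, IsBounded (range xk) → ∀ x y : V,
      Tendsto (fun k => S (tk k) (xk k)) atTop (𝓝 x) →
      Tendsto (fun k => S (t + tk k) (xk k)) atTop (𝓝 y) → S t x = y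

/-- The ω-limit set `Λ^V(G) = ⋂_{s ≥ 0} cl_V ⋃_{t ≥ s} S(t)G`. -/
def omegaLim (S : ℝ → V → V) (G : Set V) : Set V :=
  ⋂ (s : ℝ) (_ : 0 ≤ s), closure (⋃ (t : ℝ) (_ : s ≤ t), S t '' G)

/-- `N^V(G,ε)`: minimal number of open `ε`-balls centered in `G` needed to cover `G`. -/
noncomputable def coverN (G : Set V) (ε : ℝ) : ℝ≥0∞ :=
  ⨅ (F : Finset V) (_ : ↑F ⊆ G) (_ : G ⊆ ⋃ x ∈ F, ball x ε), (F.card : ℝ≥0∞)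

open Classical in
/-- Fractal (box-counting) dimension `limsup_{ε→0⁺} log N^V(M,ε) / log (1/ε)`. -/
noncomputable def fracDim (M : Set V) : ℝ≥0∞ :=
  limsup (fun ε : ℝ =>
    if coverN M ε = ⊤ then (⊤ : ℝ≥0∞)
    else ENNReal.ofReal (Real.log (coverN M ε).toReal / Real.log (1 / ε))) (𝓝[>] (0 : ℝ))

/-- `M` attracts all bounded sets at exponential rate `ξ`. -/
def ExpAttractsAt (S : ℝ → V → V) (M : Set V) (ξ : ℝ) : Prop :=
  ∀ G : Set V, IsBounded G →
    Tendsto (fun t : ℝ => ENNReal.ofReal (Real.exp (ξ * t)) * attrDist (S t '' G) M)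
      atTop (𝓝 0)

/-- A `T`-discrete exponential attractor. -/
def IsDiscExpAttr (S : ℝ → V → V) (T : ℝ) (M : Set V) : Prop :=
  M.Nonempty ∧ IsCompact M ∧ S T '' M ⊆ M ∧ fracDim M ≠ ⊤ ∧
    ∃ ξ : ℝ, 0 < ξ ∧ ExpAttractsAt S M ξ

/-- The covering condition `N^V(S(kT)B, a·qᵏ) ≤ b·hᵏ` for `k ≥ k₀`. -/
def CoveringCond (S : ℝ → V → V) (T : ℝ) (B : Set V) (k₀ : ℕ) (a b q h : ℝ) : Prop :=
  ∀ k : ℕ, k₀ ≤ k →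
    coverN (S (k * T) '' B) (a * q ^ k) ≤ ENNReal.ofReal (b * h ^ k)

end Defs

section Statement0

variable {V : Type*} [MetricSpace V]

/-- Property (2): along any time sequence tending to infinity, orbits starting in `B`
have convergent subsequences. -/
def SubseqConv (S : ℝ → V → V) (B : Set V) : Prop :=
  ∀ tk : ℕ → ℝ, (∀ k, 0 ≤ tk k) → Tendsto tk atTop atTop →
    ∀ xk : ℕ → V, (∀ k, xk k ∈ B) →
      ∃ φ : ℕ → ℕ, StrictMono φ ∧ ∃ z : V,
        Tendsto (fun j => S (tk (φ j)) (xk (φ j))) atTop (𝓝 z)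

/-!
Along times `t_k → ∞`, the limits of `S(t_k) x_k` with `x_k ∈ B` are exactly the points of
`Λ(B)`. So the subsequence property makes `Λ(B)` nonempty and sequentially compact, and
asymptotic closedness turns `S(t_k) x_k → x`, `S(t + t_k) x_k → y` into `S(t) x = y`, which gives
`S(t) Λ(B) = Λ(B)`. If a bounded `G` were not attracted, there would be points `S(t_k) g_k`
staying `ε`-far from `Λ(B)`; but `S(t_k) g_k = S(t_k - t_G) (S(t_G) g_k)` with `S(t_G) g_k ∈ B`,
so a subsequence converges into `Λ(B)`.

For a compact attracting `K`, the closed `1`-neighbourhood `B` of `K` is bounded, absorbing and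
has the subsequence property, since orbit points approach the compact `K`. The attractor `Λ(B)`
is invariant and attracted by the closed set `K`, so it lies in `K`, hence in `Λ(K) ⊆ Λ(B)`.
-/

lemma infEDist_le_attrDist {G A : Set V} {x : V} (hx : x ∈ G) : infEDist x A ≤ attrDist G A :=
  le_iSup₂ (f := fun y (_ : y ∈ G) => infEDist y A) x hx

lemma omegaLim_mono {S : ℝ → V → V} {G H : Set V} (h : G ⊆ H) :
    omegaLim S G ⊆ omegaLim S H :=
  iInter₂_mono fun _ _ => closure_mono <| iUnion₂_mono fun _ _ => image_mono h

lemma mem_omegaLim_of_tendsto {S : ℝ → V → V} {G : Set V} {tk : ℕ → ℝ}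
    (htk : Tendsto tk atTop atTop) {xk : ℕ → V} (hxk : ∀ k, xk k ∈ G) {x : V}
    (hlim : Tendsto (fun k => S (tk k) (xk k)) atTop (𝓝 x)) : x ∈ omegaLim S G := by
  refine mem_iInter₂.2 fun s _ => mem_closure_of_tendsto hlim ?_
  filter_upwards [htk.eventually_ge_atTop s] with k hk
  exact mem_iUnion₂.2 ⟨tk k, hk, mem_image_of_mem _ (hxk k)⟩

lemma exists_dist_lt_of_mem_omegaLim {S : ℝ → V → V} {G : Set V} {x : V}
    (hx : x ∈ omegaLim S G) {s ε : ℝ} (hs : 0 ≤ s) (hε : 0 < ε) :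
    ∃ t, s ≤ t ∧ ∃ g ∈ G, dist (S t g) x < ε := by
  obtain ⟨_, hy, hyx⟩ := Metric.mem_closure_iff.1 (mem_iInter₂.1 hx s hs) ε hε
  obtain ⟨t, ht, g, hg, rfl⟩ : ∃ t, s ≤ t ∧ ∃ g ∈ G, S t g = _ := by simpa using hy
  exact ⟨t, ht, g, hg, by rwa [dist_comm]⟩

lemma exists_seq_dist_tendsto_zero_of_mem_omegaLim {S : ℝ → V → V} {G : Set V} {u : ℕ → V}
    (hu : ∀ k, u k ∈ omegaLim S G) {s : ℝ} (hs : 0 ≤ s) :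
    ∃ tk : ℕ → ℝ, ∃ xk : ℕ → V, (∀ k, s ≤ tk k) ∧ Tendsto tk atTop atTop ∧
      (∀ k, xk k ∈ G) ∧ Tendsto (fun k => dist (S (tk k) (xk k)) (u k)) atTop (𝓝 0) := by
  choose tk htk xk hxk hdist using fun k : ℕ =>
    exists_dist_lt_of_mem_omegaLim (hu k) (add_nonneg hs k.cast_nonneg) Nat.one_div_pos_of_nat
  refine ⟨tk, xk, fun k => by linarith [htk k, k.cast_nonneg (α := ℝ)],
    tendsto_atTop_mono htk (tendsto_atTop_add_const_left _ s tendsto_natCast_atTop_atTop), hxk,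
    squeeze_zero (fun _ => dist_nonneg) (fun k => (hdist k).le)
      tendsto_one_div_add_atTop_nhds_zero_nat⟩

lemma exists_seq_tendsto_of_mem_omegaLim {S : ℝ → V → V} {G : Set V} {x : V}
    (hx : x ∈ omegaLim S G) {s : ℝ} (hs : 0 ≤ s) :
    ∃ tk : ℕ → ℝ, ∃ xk : ℕ → V, (∀ k, s ≤ tk k) ∧ Tendsto tk atTop atTop ∧
      (∀ k, xk k ∈ G) ∧ Tendsto (fun k => S (tk k) (xk k)) atTop (𝓝 x) := by
  obtain ⟨tk, xk, htk0, htk, hxk, hdist⟩ :=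
    exists_seq_dist_tendsto_zero_of_mem_omegaLim (fun _ => hx) hs
  exact ⟨tk, xk, htk0, htk, hxk, tendsto_iff_dist_tendsto_zero.2 hdist⟩

lemma AsympClosed.eq_of_tendsto {S : ℝ → V → V} (hac : AsympClosed S) {B : Set V}
    (hB : IsBounded B) {t : ℝ} (ht : 0 ≤ t) {tk : ℕ → ℝ} (htk0 : ∀ k, 0 ≤ tk k)
    (htk : Tendsto tk atTop atTop) {xk : ℕ → V} (hxk : ∀ k, xk k ∈ B) {x y : V}
    (hx : Tendsto (fun k => S (tk k) (xk k)) atTop (𝓝 x))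
    (hy : Tendsto (fun k => S (t + tk k) (xk k)) atTop (𝓝 y)) : S t x = y :=
  hac t ht tk htk0 htk xk (hB.subset (range_subset_iff.2 hxk)) x y hx hy

namespace SubseqConv

variable {S : ℝ → V → V} {B : Set V} {tk : ℕ → ℝ} {xk : ℕ → V}

lemma exists_mem_omegaLim_tendsto (hsc : SubseqConv S B) (htk0 : ∀ k, 0 ≤ tk k)
    (htk : Tendsto tk atTop atTop) (hxk : ∀ k, xk k ∈ B) :
    ∃ φ : ℕ → ℕ, StrictMono φ ∧ ∃ z ∈ omegaLim S B,
      Tendsto (fun j => S (tk (φ j)) (xk (φ j))) atTop (𝓝 z) := by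
  obtain ⟨φ, hφ, z, hz⟩ := hsc tk htk0 htk xk hxk
  exact ⟨φ, hφ, z,
    mem_omegaLim_of_tendsto (htk.comp hφ.tendsto_atTop) (fun j => hxk (φ j)) hz, hz⟩

lemma omegaLim_nonempty (hsc : SubseqConv S B) (hB : B.Nonempty) : (omegaLim S B).Nonempty := by
  obtain ⟨x, hx⟩ := hB
  obtain ⟨-, -, z, hz, -⟩ := hsc.exists_mem_omegaLim_tendsto (fun k => k.cast_nonneg)
    tendsto_natCast_atTop_atTop (fun _ => hx)
  exact ⟨z, hz⟩

lemma isCompact_omegaLim (hsc : SubseqConv S B) : IsCompact (omegaLim S B) := by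
  refine IsSeqCompact.isCompact fun u hu => ?_
  obtain ⟨tk, xk, htk0, htk, hxk, hdist⟩ :=
    exists_seq_dist_tendsto_zero_of_mem_omegaLim hu le_rfl
  obtain ⟨φ, hφ, z, hz, hlim⟩ := hsc.exists_mem_omegaLim_tendsto htk0 htk hxk
  exact ⟨z, hz, φ, hφ, hlim.congr_dist (hdist.comp hφ.tendsto_atTop)⟩

lemma image_omegaLim_subset (hsc : SubseqConv S B) (hac : AsympClosed S) (hB : IsBounded B)
    {t : ℝ} (ht : 0 ≤ t) : S t '' omegaLim S B ⊆ omegaLim S B := by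
  rintro _ ⟨x, hx, rfl⟩
  obtain ⟨tk, xk, htk0, htk, hxk, hlim⟩ := exists_seq_tendsto_of_mem_omegaLim hx le_rfl
  obtain ⟨φ, hφ, y, hy, hlim'⟩ := hsc.exists_mem_omegaLim_tendsto
    (fun k => add_nonneg ht (htk0 k)) (tendsto_atTop_add_const_left _ t htk) hxk
  have hφ' := hφ.tendsto_atTop
  rwa [hac.eq_of_tendsto hB ht (fun j => htk0 (φ j)) (htk.comp hφ') (fun j => hxk (φ j))
    (hlim.comp hφ') hlim']

lemma omegaLim_subset_image (hsc : SubseqConv S B) (hac : AsympClosed S) (hB : IsBounded B)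
    {t : ℝ} (ht : 0 ≤ t) : omegaLim S B ⊆ S t '' omegaLim S B := by
  intro x hx
  obtain ⟨tk, xk, htk0, htk, hxk, hlim⟩ := exists_seq_tendsto_of_mem_omegaLim hx ht
  have hsk : Tendsto (fun k => tk k - t) atTop atTop := tendsto_atTop_add_const_right _ (-t) htk
  obtain ⟨φ, hφ, w, hw, hlim'⟩ := hsc.exists_mem_omegaLim_tendsto
    (fun k => sub_nonneg.2 (htk0 k)) hsk hxk
  have hφ' := hφ.tendsto_atTop
  refine ⟨w, hw, hac.eq_of_tendsto hB ht (fun j => sub_nonneg.2 (htk0 (φ j))) (hsk.comp hφ')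
    (fun j => hxk (φ j)) hlim' ?_⟩
  simpa only [Function.comp_def, add_sub_cancel] using hlim.comp hφ'

lemma exists_infEDist_omegaLim_lt (hsc : SubseqConv S B) (htk0 : ∀ k, 0 ≤ tk k)
    (htk : Tendsto tk atTop atTop) (hxk : ∀ k, xk k ∈ B) {ε : ℝ≥0∞} (hε : 0 < ε) :
    ∃ k, infEDist (S (tk k) (xk k)) (omegaLim S B) < ε := by
  obtain ⟨φ, -, z, hz, hlim⟩ := hsc.exists_mem_omegaLim_tendsto htk0 htk hxk
  have h0 : Tendsto (fun j => infEDist (S (tk (φ j)) (xk (φ j))) (omegaLim S B)) atTop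
      (𝓝 (infEDist z (omegaLim S B))) := (continuous_infEDist.tendsto z).comp hlim
  rw [infEDist_zero_of_mem hz] at h0
  obtain ⟨j, hj⟩ := (h0.eventually_lt_const hε).exists
  exact ⟨φ j, hj⟩

lemma attractsSet_omegaLim (hsc : SubseqConv S B) (hS : IsSemiflow S)
    (habs : IsAbsorbingSet S B) : AttractsSet S (omegaLim S B) := by
  intro G hG
  obtain ⟨tG, htG0, hGB⟩ := habs G hG
  rw [ENNReal.tendsto_nhds_zero]
  by_contra! hfreq
  obtain ⟨ε, hε, hfreq⟩ := hfreq
  have hfar : ∀ k : ℕ, ∃ t, tG + k ≤ t ∧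
      ∃ g ∈ G, ε < infEDist (S t g) (omegaLim S B) := by
    intro k
    obtain ⟨t, ht, hlt⟩ := frequently_atTop.1 hfreq (tG + k)
    obtain ⟨_, ⟨g, hg, rfl⟩, hgfar⟩ := lt_biSup_iff.1 hlt
    exact ⟨t, ht, g, hg, hgfar⟩
  choose tk htk g hg hfar using hfar
  obtain ⟨k, hk⟩ := hsc.exists_infEDist_omegaLim_lt (tk := fun k => tk k - tG)
    (xk := fun k => S tG (g k)) (fun k => by linarith [htk k, k.cast_nonneg (α := ℝ)])
    (tendsto_atTop_mono (fun k => by linarith [htk k]) tendsto_natCast_atTop_atTop)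
    (fun k => hGB tG le_rfl (mem_image_of_mem _ (hg k))) hε
  rw [hS.2 _ _ (by linarith [htk k, k.cast_nonneg (α := ℝ)]) htG0, sub_add_cancel] at hk
  exact (hfar k).not_gt hk

end SubseqConv

theorem isGlobalAttr_omegaLim_of_isAbsorbingSet {S : ℝ → V → V} (hS : IsSemiflow S)
    (hac : AsympClosed S) {B : Set V} (hBne : B.Nonempty) (hB : IsBounded B)
    (habs : IsAbsorbingSet S B) (hsc : SubseqConv S B) : IsGlobalAttr S (omegaLim S B) :=
  ⟨hsc.omegaLim_nonempty hBne, hsc.isCompact_omegaLim,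
    fun _ ht =>
      (hsc.image_omegaLim_subset hac hB ht).antisymm (hsc.omegaLim_subset_image hac hB ht),
    hsc.attractsSet_omegaLim hS habs⟩

section CompactAttracting

variable {S : ℝ → V → V} {K : Set V}

lemma tendsto_infEDist_of_attractsSet (hatt : AttractsSet S K) {B : Set V} (hB : IsBounded B)
    {tk : ℕ → ℝ} (htk : Tendsto tk atTop atTop) {xk : ℕ → V} (hxk : ∀ k, xk k ∈ B) :
    Tendsto (fun k => infEDist (S (tk k) (xk k)) K) atTop (𝓝 0) :=
  tendsto_of_tendsto_of_tendsto_of_le_of_le tendsto_const_nhds ((hatt B hB).comp htk)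
    (fun _ => zero_le) fun k => infEDist_le_attrDist (mem_image_of_mem _ (hxk k))

lemma isAbsorbingSet_cthickening (hatt : AttractsSet S K) {δ : ℝ} (hδ : 0 < δ) :
    IsAbsorbingSet S (cthickening δ K) := by
  intro G hG
  obtain ⟨t₀, ht₀⟩ := eventually_atTop.1 <|
    ENNReal.tendsto_nhds_zero.1 (hatt G hG) _ (ENNReal.ofReal_pos.2 hδ)
  refine ⟨max t₀ 0, le_max_right _ _, fun t ht x hx => mem_cthickening_iff.2 ?_⟩
  exact (infEDist_le_attrDist hx).trans (ht₀ t ((le_max_left _ _).trans ht))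

lemma subseqConv_of_attractsSet (hKne : K.Nonempty) (hK : IsCompact K) (hatt : AttractsSet S K)
    {B : Set V} (hB : IsBounded B) : SubseqConv S B := by
  intro tk _ htk xk hxk
  choose a haK hae using fun k => hK.exists_infEDist_eq_edist hKne (S (tk k) (xk k))
  obtain ⟨z, -, φ, hφ, haz⟩ := hK.tendsto_subseq haK
  have hnear : Tendsto (fun j => edist (S (tk (φ j)) (xk (φ j))) (a (φ j))) atTop (𝓝 0) := by
    simpa only [Function.comp_def, ← hae] using
      (tendsto_infEDist_of_attractsSet hatt hB htk hxk).comp hφ.tendsto_atTop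
  have hsum := hnear.add (tendsto_iff_edist_tendsto_0.1 haz)
  rw [add_zero] at hsum
  exact ⟨φ, hφ, z, tendsto_iff_edist_tendsto_0.2 <| tendsto_of_tendsto_of_tendsto_of_le_of_le
    tendsto_const_nhds hsum (fun _ => zero_le) fun _ => edist_triangle _ _ _⟩

lemma IsGlobalAttr.subset_of_attractsSet {A : Set V} (hA : IsGlobalAttr S A) (hK : IsClosed K)
    (hatt : AttractsSet S K) : A ⊆ K := by
  obtain ⟨-, hAc, hAinv, -⟩ := hA
  intro a ha
  have h0 : infEDist a K ≤ 0 := ge_of_tendsto (hatt A hAc.isBounded) <|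
    eventually_atTop.2 ⟨0, fun t ht => infEDist_le_attrDist (by rwa [hAinv t ht])⟩
  rw [← hK.closure_eq]
  exact mem_closure_iff_infEDist_zero.2 (nonpos_iff_eq_zero.1 h0)

lemma IsGlobalAttr.subset_omegaLim {A : Set V} (hA : IsGlobalAttr S A) (hAK : A ⊆ K) :
    A ⊆ omegaLim S K := by
  intro a ha
  refine mem_iInter₂.2 fun s hs => subset_closure (mem_iUnion₂.2 ⟨s, le_rfl, ?_⟩)
  rw [← hA.2.2.1 s hs] at ha
  exact image_mono hAK ha

theorem isGlobalAttr_omegaLim_of_isCompact (hS : IsSemiflow S) (hac : AsympClosed S)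
    (hKne : K.Nonempty) (hK : IsCompact K) (hatt : AttractsSet S K) :
    IsGlobalAttr S (omegaLim S K) := by
  have hB : IsBounded (cthickening 1 K) := hK.isBounded.cthickening
  have hA := isGlobalAttr_omegaLim_of_isAbsorbingSet hS hac (hKne.mono (self_subset_cthickening K))
    hB (isAbsorbingSet_cthickening hatt one_pos) (subseqConv_of_attractsSet hKne hK hatt hB)
  rwa [(omegaLim_mono (self_subset_cthickening K)).antisymm
    (hA.subset_omegaLim (hA.subset_of_attractsSet hK.isClosed hatt))]

end CompactAttracting

theorem existence_criterion_global_attractor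
    (S : ℝ → V → V) (hS : IsSemiflow S) (hac : AsympClosed S) :
    ((∃ A : Set V, IsGlobalAttr S A) ↔
      (∃ B : Set V, B.Nonempty ∧ IsBounded B ∧ IsAbsorbingSet S B ∧ SubseqConv S B)) ∧
    ((∃ A : Set V, IsGlobalAttr S A) ↔
      (∃ K : Set V, K.Nonempty ∧ IsCompact K ∧ AttractsSet S K)) ∧
    (∀ B : Set V, B.Nonempty → IsBounded B → IsAbsorbingSet S B → SubseqConv S B →
      IsGlobalAttr S (omegaLim S B)) ∧
    (∀ K : Set V, K.Nonempty → IsCompact K → AttractsSet S K →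
      IsGlobalAttr S (omegaLim S K)) := by
  have hB := fun B : Set V => isGlobalAttr_omegaLim_of_isAbsorbingSet (B := B) hS hac
  have hK := fun K : Set V => isGlobalAttr_omegaLim_of_isCompact (K := K) hS hac
  refine ⟨⟨?_, fun ⟨B, h⟩ => ⟨_, hB B h.1 h.2.1 h.2.2.1 h.2.2.2⟩⟩,
    ⟨fun ⟨A, hA⟩ => ⟨A, hA.1, hA.2.1, hA.2.2.2⟩,
      fun ⟨K, h⟩ => ⟨_, hK K h.1 h.2.1 h.2.2⟩⟩,
    hB, hK⟩
  rintro ⟨A, hAne, hAc, -, hAatt⟩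
  have hbd : IsBounded (cthickening 1 A) := hAc.isBounded.cthickening
  exact ⟨cthickening 1 A, hAne.mono (self_subset_cthickening A), hbd,
    isAbsorbingSet_cthickening hAatt one_pos, subseqConv_of_attractsSet hAne hAc hAatt hbd⟩

end Statement0
end

section
/- Let A be a nonempty subset of a metric space (V,d) and let ρ: A × A → [0,∞) be a pseudometric on A (symmetric, satisfying the triangle inequality, with ρ(x,x) = 0) such that (A,ρ) is totally bounded. Suppose S: A → V is a map and η ≥ 0 is such that d(S(x),S(y)) ≤ η·d(x,y) + ρ(x,y) for all x,y ∈ A. If N̂^V(A,ε) < ∞ for some ε > 0, then for any σ > 0 one has N̂^V(S(A), (η+σ)ε) ≤ N̂^V(A,ε)·c_ρ(A,ε,σε), where c_ρ(A,ε,μ) = sup{ m_ρ(F,μ) : ∅ ≠ F ⊆ A, diam^V(F) ≤ 2ε }; moreover c_ρ(A,ε,μ) ≤ m_ρ(A,μ). -/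
open Filter Metric Set Topology Bornology
open scoped ENNReal

section Defs

variable {V : Type*} [MetricSpace V]

/-- `N̂^V(B,ε)`: minimal number of subsets of `B` of diameter at most `2ε` covering `B`. -/
noncomputable def coverNDiam (B : Set V) (ε : ℝ) : ℝ≥0∞ :=
  ⨅ (𝒞 : Finset (Set V)) (_ : ∀ F ∈ 𝒞, F ⊆ B ∧ EMetric.diam F ≤ ENNReal.ofReal (2 * ε))
    (_ : B ⊆ ⋃₀ ↑𝒞), (𝒞.card : ℝ≥0∞)

/-- `m_ρ(F,ε)`: the maximal cardinality of an `ε`-distinguishable (w.r.t. `ρ`) subset of `F`. -/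
noncomputable def maxDisting {α : Type*} (ρ : α → α → ℝ) (F : Set α) (ε : ℝ) : ℝ≥0∞ :=
  ⨆ (U : Finset α) (_ : ↑U ⊆ F) (_ : ∀ x ∈ U, ∀ y ∈ U, x ≠ y → ε ≤ ρ x y),
    (U.card : ℝ≥0∞)

/-- `c_ρ(A,ε,μ) = sup { m_ρ(F,μ) : ∅ ≠ F ⊆ A, diam^V(F) ≤ 2ε }`. -/
noncomputable def cRho (ρ : V → V → ℝ) (A : Set V) (ε μ : ℝ) : ℝ≥0∞ :=
  ⨆ (F : Set V) (_ : F ⊆ A) (_ : F.Nonempty)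
    (_ : EMetric.diam F ≤ ENNReal.ofReal (2 * ε)), maxDisting ρ F μ

end Defs

/-!
Cover `A` by a minimal family of sets `F` of diameter at most `2ε`. Inside each `F` pick a
maximal `σε`-separated set `U_F` for `ρ`; it is finite by total boundedness, has at most
`c_ρ(A, ε, σε)` points, and by maximality the `ρ`-balls of radius `σε` around its points cover `F`.
On such a ball `d(Sx, Sy) ≤ η · 2ε + 2σε`, so the images of these balls form an admissible cover
of `S(A)` at scale `(η + σ)ε` with at most `N̂^V(A, ε) · c_ρ(A, ε, σε)` members.
-/

section Separated

variable {α : Type*} {ρ : α → α → ℝ} {μ : ℝ}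

def IsRhoSeparated (ρ : α → α → ℝ) (μ : ℝ) (U : Finset α) : Prop :=
  ∀ x ∈ U, ∀ y ∈ U, x ≠ y → μ ≤ ρ x y

theorem IsRhoSeparated.insert [DecidableEq α] {U : Finset α} {x : α}
    (hU : IsRhoSeparated ρ μ U) (hx : ∀ u ∈ U, μ ≤ ρ x u ∧ μ ≤ ρ u x) :
    IsRhoSeparated ρ μ (insert x U) := by
  intro a ha b hb hab
  rw [Finset.mem_insert] at ha hb
  rcases ha with rfl | ha
  · rcases hb with rfl | hb
    exacts [absurd rfl hab, (hx b hb).1]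
  · rcases hb with rfl | hb
    exacts [(hx a ha).2, hU a ha b hb hab]

theorem le_maxDisting {F : Set α} {U : Finset α} (hUF : ↑U ⊆ F) (hU : IsRhoSeparated ρ μ U) :
    (U.card : ℝ≥0∞) ≤ maxDisting ρ F μ :=
  le_iSup₂_of_le U hUF (le_iSup_of_le hU le_rfl)

theorem maxDisting_mono {F G : Set α} (h : F ⊆ G) : maxDisting ρ F μ ≤ maxDisting ρ G μ :=
  iSup₂_le fun _ hUF => iSup_le fun hU => le_maxDisting (hUF.trans h) hU

theorem IsRhoSeparated.card_le_of_net {A : Set α}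
    (hsymm : ∀ x ∈ A, ∀ y ∈ A, ρ x y = ρ y x)
    (htri : ∀ x ∈ A, ∀ y ∈ A, ∀ z ∈ A, ρ x z ≤ ρ x y + ρ y z)
    {U W : Finset α} (hU : IsRhoSeparated ρ μ U) (hUA : ↑U ⊆ A) (hWA : ↑W ⊆ A)
    (hW : ∀ x ∈ A, ∃ w ∈ W, ρ w x < μ / 2) : U.card ≤ W.card := by
  choose! g hgW hg using hW
  refine Finset.card_le_card_of_injOn g (fun u hu => hgW u (hUA hu)) ?_
  intro u hu v hv huv
  by_contra hne
  have hu' := hUA hu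
  have hv' := hUA hv
  have hgA : g u ∈ A := hWA (hgW u hu')
  have hv_near : ρ (g u) v < μ / 2 := huv ▸ hg v hv'
  have := htri u hu' (g u) hgA v hv'
  have := hsymm u hu' (g u) hgA
  linarith [hg u hu', hU u hu v hv hne]

theorem exists_isRhoSeparated_net {A : Set α}
    (hsymm : ∀ x ∈ A, ∀ y ∈ A, ρ x y = ρ y x) (hrefl : ∀ x ∈ A, ρ x x = 0)
    (htri : ∀ x ∈ A, ∀ y ∈ A, ∀ z ∈ A, ρ x z ≤ ρ x y + ρ y z)
    (htb : ∀ δ : ℝ, 0 < δ → ∃ W : Finset α, ↑W ⊆ A ∧ ∀ x ∈ A, ∃ w ∈ W, ρ w x < δ)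
    (hμ : 0 < μ) {F : Set α} (hFA : F ⊆ A) :
    ∃ U : Finset α, ↑U ⊆ F ∧ IsRhoSeparated ρ μ U ∧ ∀ x ∈ F, ∃ u ∈ U, ρ u x < μ := by
  classical
  obtain ⟨W, hWA, hW⟩ := htb (μ / 2) (by positivity)
  let P : ℕ → Prop := fun n => ∃ U : Finset α, ↑U ⊆ F ∧ IsRhoSeparated ρ μ U ∧ U.card = n
  have hP0 : P 0 := ⟨∅, by simp, by simp [IsRhoSeparated], rfl⟩
  -- Separated subsets of `A` have at most `W.card` points, so one of maximal cardinality exists.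
  obtain ⟨U, hUF, hU, hcard⟩ := Nat.findGreatest_spec (Nat.zero_le W.card) hP0
  refine ⟨U, hUF, hU, fun x hxF => ?_⟩
  by_contra! hfar
  have hxA := hFA hxF
  have hxU : x ∉ U := fun hxU => by linarith [hfar x hxU, hrefl x hxA]
  have hins : IsRhoSeparated ρ μ (insert x U) :=
    hU.insert fun u hu => ⟨hsymm x hxA u (hFA (hUF hu)) ▸ hfar u hu, hfar u hu⟩
  have hinsF : ↑(insert x U) ⊆ F := by
    rw [Finset.coe_insert]
    exact Set.insert_subset hxF hUF
  have hle := Nat.le_findGreatest (hins.card_le_of_net hsymm htri (hinsF.trans hFA) hWA hW)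
    (show P _ from ⟨_, hinsF, hins, rfl⟩)
  rw [Finset.card_insert_of_notMem hxU] at hle
  omega

end Separated

section Covering

variable {V : Type*} [MetricSpace V]

theorem cRho_le_maxDisting {ρ : V → V → ℝ} {A : Set V} {ε μ : ℝ} :
    cRho ρ A ε μ ≤ maxDisting ρ A μ :=
  iSup₂_le fun _ hFA => iSup₂_le fun _ _ => maxDisting_mono hFA

theorem card_le_cRho {ρ : V → V → ℝ} {A F : Set V} {ε μ : ℝ} {U : Finset V}
    (hFA : F ⊆ A) (hF : ediam F ≤ ENNReal.ofReal (2 * ε)) (hUF : ↑U ⊆ F)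
    (hU : IsRhoSeparated ρ μ U) : (U.card : ℝ≥0∞) ≤ cRho ρ A ε μ := by
  rcases U.eq_empty_or_nonempty with rfl | ⟨u, hu⟩
  · simp
  exact (le_maxDisting hUF hU).trans <|
    le_iSup₂_of_le F hFA (le_iSup₂_of_le ⟨u, hUF hu⟩ hF le_rfl)

def IsDiamCover (B : Set V) (ε : ℝ) (𝒞 : Finset (Set V)) : Prop :=
  (∀ F ∈ 𝒞, F ⊆ B ∧ ediam F ≤ ENNReal.ofReal (2 * ε)) ∧ B ⊆ ⋃₀ ↑𝒞

theorem coverNDiam_le_card {B : Set V} {ε : ℝ} {𝒞 : Finset (Set V)} (h : IsDiamCover B ε 𝒞) :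
    coverNDiam B ε ≤ 𝒞.card :=
  iInf₂_le_of_le 𝒞 h.1 (iInf_le_of_le h.2 le_rfl)

theorem exists_isDiamCover_card_le {B : Set V} {ε : ℝ} (h : coverNDiam B ε ≠ ⊤) :
    ∃ 𝒞 : Finset (Set V), IsDiamCover B ε 𝒞 ∧ (𝒞.card : ℝ≥0∞) ≤ coverNDiam B ε := by
  classical
  have hex : ∃ n, ∃ 𝒞 : Finset (Set V), IsDiamCover B ε 𝒞 ∧ 𝒞.card = n := by
    by_contra! hnone
    exact h <| top_unique <| le_iInf₂ fun 𝒞 h₁ => le_iInf fun h₂ => (hnone _ 𝒞 ⟨h₁, h₂⟩ rfl).elim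
  obtain ⟨𝒞, h𝒞, hcard⟩ := Nat.find_spec hex
  refine ⟨𝒞, h𝒞, le_iInf₂ fun 𝒞' h₁ => le_iInf fun h₂ => ?_⟩
  rw [hcard]
  exact_mod_cast Nat.find_min' hex ⟨𝒞', ⟨h₁, h₂⟩, rfl⟩

variable {A : Set V} {ρ : V → V → ℝ} {S : V → V} {η ε μ : ℝ}

theorem ediam_image_rhoBall_le
    (hsymm : ∀ x ∈ A, ∀ y ∈ A, ρ x y = ρ y x)
    (htri : ∀ x ∈ A, ∀ y ∈ A, ∀ z ∈ A, ρ x z ≤ ρ x y + ρ y z) (hη : 0 ≤ η)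
    (hS : ∀ x ∈ A, ∀ y ∈ A, dist (S x) (S y) ≤ η * dist x y + ρ x y) (hε : 0 ≤ ε)
    {F : Set V} (hFA : F ⊆ A) (hF : ediam F ≤ ENNReal.ofReal (2 * ε)) {u : V}
    (hu : u ∈ A) :
    ediam (S '' {x ∈ F | ρ u x < μ}) ≤ ENNReal.ofReal (2 * (η * ε + μ)) := by
  refine ediam_le ?_
  rintro _ ⟨x, ⟨hxF, hux⟩, rfl⟩ _ ⟨y, ⟨hyF, huy⟩, rfl⟩
  have hxA := hFA hxF
  have hyA := hFA hyF
  have hdxy : dist x y ≤ 2 * ε :=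
    (edist_le_ofReal (by positivity)).mp ((edist_le_ediam_of_mem hxF hyF).trans hF)
  have hρxy : ρ x y < 2 * μ := by
    linarith [htri x hxA u hu y hyA, hsymm x hxA u hu]
  have hSxy : dist (S x) (S y) ≤ 2 * (η * ε + μ) := by
    nlinarith [hS x hxA y hyA, mul_le_mul_of_nonneg_left hdxy hη]
  rw [edist_dist]
  exact ENNReal.ofReal_le_ofReal hSxy

theorem IsDiamCover.refine [DecidableEq V]
    (hsymm : ∀ x ∈ A, ∀ y ∈ A, ρ x y = ρ y x)
    (htri : ∀ x ∈ A, ∀ y ∈ A, ∀ z ∈ A, ρ x z ≤ ρ x y + ρ y z) (hη : 0 ≤ η)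
    (hS : ∀ x ∈ A, ∀ y ∈ A, dist (S x) (S y) ≤ η * dist x y + ρ x y) (hε : 0 ≤ ε)
    {𝒞 : Finset (Set V)} (h𝒞 : IsDiamCover A ε 𝒞) {U : Set V → Finset V}
    (hUF : ∀ F ∈ 𝒞, ↑(U F) ⊆ F) (hUnet : ∀ F ∈ 𝒞, ∀ x ∈ F, ∃ u ∈ U F, ρ u x < μ) :
    IsDiamCover (S '' A) (η * ε + μ)
      (𝒞.biUnion fun F => (U F).image fun u => S '' {x ∈ F | ρ u x < μ}) := by
  constructor
  · intro G hG
    obtain ⟨F, hF, hG⟩ := Finset.mem_biUnion.mp hG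
    obtain ⟨u, hu, rfl⟩ := Finset.mem_image.mp hG
    obtain ⟨hFA, hFdiam⟩ := h𝒞.1 F hF
    exact ⟨image_mono fun x hx => hFA hx.1,
      ediam_image_rhoBall_le hsymm htri hη hS hε hFA hFdiam (hFA (hUF F hF hu))⟩
  · rintro _ ⟨x, hxA, rfl⟩
    obtain ⟨F, hF, hxF⟩ := h𝒞.2 hxA
    obtain ⟨u, hu, hux⟩ := hUnet F hF x hxF
    exact ⟨_, Finset.mem_biUnion.mpr ⟨F, hF, Finset.mem_image_of_mem _ hu⟩, x, ⟨hxF, hux⟩, rfl⟩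

end Covering

theorem Finset.card_biUnion_le_card_mul_of_le {ι β : Type*} [DecidableEq β] (s : Finset ι)
    (t : ι → Finset β) {c : ℝ≥0∞} (h : ∀ i ∈ s, ((t i).card : ℝ≥0∞) ≤ c) :
    ((s.biUnion t).card : ℝ≥0∞) ≤ s.card * c :=
  calc ((s.biUnion t).card : ℝ≥0∞) ≤ ∑ i ∈ s, ((t i).card : ℝ≥0∞) := by
        exact_mod_cast Finset.card_biUnion_le
    _ ≤ ∑ _i ∈ s, c := Finset.sum_le_sum h
    _ = s.card * c := by rw [Finset.sum_const, nsmul_eq_mul]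

section Statement5

variable {V : Type*} [MetricSpace V]

theorem fundamental_covering_lemma_general
    (A : Set V) (ρ : V → V → ℝ)
    (hρ_symm : ∀ x ∈ A, ∀ y ∈ A, ρ x y = ρ y x)
    (hρ_refl : ∀ x ∈ A, ρ x x = 0)
    (hρ_triangle : ∀ x ∈ A, ∀ y ∈ A, ∀ z ∈ A, ρ x z ≤ ρ x y + ρ y z)
    (hρ_totallyBounded : ∀ δ : ℝ, 0 < δ →
      ∃ U : Finset V, ↑U ⊆ A ∧ ∀ x ∈ A, ∃ u ∈ U, ρ u x < δ)
    (S : V → V) (η : ℝ) (hη : 0 ≤ η)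
    (hS : ∀ x ∈ A, ∀ y ∈ A, dist (S x) (S y) ≤ η * dist x y + ρ x y)
    (ε : ℝ) (hε : 0 < ε) (hfin : coverNDiam A ε ≠ ⊤) :
    (∀ σ : ℝ, 0 < σ →
      coverNDiam (S '' A) ((η + σ) * ε) ≤ coverNDiam A ε * cRho ρ A ε (σ * ε)) ∧
    (∀ μ : ℝ, 0 < μ → cRho ρ A ε μ ≤ maxDisting ρ A μ) := by
  classical
  refine ⟨fun σ hσ => ?_, fun μ _ => cRho_le_maxDisting⟩
  obtain ⟨𝒞, h𝒞, hcard⟩ := exists_isDiamCover_card_le hfin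
  choose! U hUF hUsep hUnet using fun F (hF : F ∈ 𝒞) =>
    exists_isRhoSeparated_net hρ_symm hρ_refl hρ_triangle hρ_totallyBounded
      (mul_pos hσ hε) (h𝒞.1 F hF).1
  have hcover := h𝒞.refine hρ_symm hρ_triangle hη hS hε.le hUF hUnet
  rw [add_mul]
  calc coverNDiam (S '' A) (η * ε + σ * ε) ≤ _ := coverNDiam_le_card hcover
    _ ≤ 𝒞.card * cRho ρ A ε (σ * ε) :=
        Finset.card_biUnion_le_card_mul_of_le _ _ fun F hF =>
          (Nat.cast_le.mpr Finset.card_image_le).trans <|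
            card_le_cRho (h𝒞.1 F hF).1 (h𝒞.1 F hF).2 (hUF F hF) (hUsep F hF)
    _ ≤ coverNDiam A ε * cRho ρ A ε (σ * ε) := by gcongr

theorem fundamental_covering_lemma
    (A : Set V) (hA : A.Nonempty) (ρ : V → V → ℝ)
    (hρ_nonneg : ∀ x ∈ A, ∀ y ∈ A, 0 ≤ ρ x y)
    (hρ_symm : ∀ x ∈ A, ∀ y ∈ A, ρ x y = ρ y x)
    (hρ_refl : ∀ x ∈ A, ρ x x = 0)
    (hρ_triangle : ∀ x ∈ A, ∀ y ∈ A, ∀ z ∈ A, ρ x z ≤ ρ x y + ρ y z)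
    (hρ_totallyBounded : ∀ δ : ℝ, 0 < δ →
      ∃ U : Finset V, ↑U ⊆ A ∧ ∀ x ∈ A, ∃ u ∈ U, ρ u x < δ)
    (S : V → V) (η : ℝ) (hη : 0 ≤ η)
    (hS : ∀ x ∈ A, ∀ y ∈ A, dist (S x) (S y) ≤ η * dist x y + ρ x y)
    (ε : ℝ) (hε : 0 < ε) (hfin : coverNDiam A ε ≠ ⊤) :
    (∀ σ : ℝ, 0 < σ →
      coverNDiam (S '' A) ((η + σ) * ε) ≤ coverNDiam A ε * cRho ρ A ε (σ * ε)) ∧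
    (∀ μ : ℝ, 0 < μ → cRho ρ A ε μ ≤ maxDisting ρ A μ) :=
  fundamental_covering_lemma_general A ρ hρ_symm hρ_refl hρ_triangle hρ_totallyBounded S η hη hS ε
    hε hfin

end Statement5
end

section
/- Let {S(t) : t ≥ 0} be a semigroup on a nonempty subset V of a Hilbert space X which satisfies the smoothing property on a subset B ⊆ V at time T > 0 with parameters (η,κ) in case (i), i.e., S(T) = C(T) + M(T) on B with ‖C(T)x − C(T)y‖_X ≤ η‖x−y‖_X, M(T): B → Z for a normed space Z that is a subspace of X compactly embedded into X with embedding constant c_{Z,X} (‖z‖_X ≤ c_{Z,X}‖z‖_Z), and ‖M(T)x − M(T)y‖_Z ≤ κ‖x−y‖_X for x,y ∈ B. Then for every ε > 0 with η + εκ < 1 there exist n ∈ ℕ, an n-dimensional subspace X_n ⊆ Z ⊆ X and the orthogonal projection P of X onto X_n such that the semigroup is of Ladyzhenskaya type on B at time T with parameters (n, η + εκ, η + c_{Z,X}κ), i.e., ‖(I−P)S(T)x − (I−P)S(T)y‖_X ≤ (η+εκ)‖x−y‖_X and ‖PS(T)x − PS(T)y‖_X ≤ (η + c_{Z,X}κ)‖x−y‖_X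 for all x,y ∈ B. -/
open Filter Metric Set Topology Bornology
open scoped ENNReal

section Defs

variable {X : Type*} [NormedAddCommGroup X]

/-- A semigroup (semiflow) of maps on the subset `V` of `X`. -/
def IsSemiflowOn (V : Set X) (S : ℝ → X → X) : Prop :=
  (∀ x ∈ V, S 0 x = x) ∧ (∀ t : ℝ, 0 ≤ t → ∀ x ∈ V, S t x ∈ V) ∧
    (∀ t s : ℝ, 0 ≤ t → 0 ≤ s → ∀ x ∈ V, S t (S s x) = S (t + s) x)

end Defs

/-!
Since the embedding `Z ↪ X` is compact, the image of the unit ball of `Z` is totally bounded, so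
it has a finite `ε`-net `t ⊆ Z`. The orthogonal projection `P` onto `span t` moves each point of
that image by at most `ε`, hence by homogeneity `‖(I - P) z‖_X ≤ ε ‖z‖_Z` for every `z ∈ Z`.
Applied to `z = M(T)x - M(T)y`, this bounds the compact part by `εκ ‖x - y‖`; the contractive
part `C(T)` is handled by `‖I - P‖ ≤ 1` and `‖P‖ ≤ 1`.
-/

section OrthogonalApproximation

open Submodule

variable {𝕜 : Type*} [RCLike 𝕜] {X : Type*} [NormedAddCommGroup X] [InnerProductSpace 𝕜 X]

theorem Submodule.norm_sub_starProjection_le_of_mem (U : Submodule 𝕜 X)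
    [U.HasOrthogonalProjection] (u : X) {m : X} (hm : m ∈ U) :
    ‖u - U.starProjection u‖ ≤ ‖u - m‖ := by
  rw [starProjection_minimal]
  exact ciInf_le ⟨0, forall_mem_range.2 fun _ => norm_nonneg _⟩ (⟨m, hm⟩ : U)

theorem Submodule.norm_add_sub_starProjection_le (U : Submodule 𝕜 X)
    [U.HasOrthogonalProjection] (a b : X) :
    ‖(a + b) - U.starProjection (a + b)‖ ≤ ‖a‖ + ‖b - U.starProjection b‖ := by
  have ha : ‖a - U.starProjection a‖ ≤ ‖a‖ := by
    simpa using U.norm_sub_starProjection_le_of_mem a U.zero_mem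
  calc ‖(a + b) - U.starProjection (a + b)‖
      = ‖(a - U.starProjection a) + (b - U.starProjection b)‖ := by rw [map_add]; abel_nf
    _ ≤ ‖a‖ + ‖b - U.starProjection b‖ := (norm_add_le _ _).trans (by gcongr)

theorem TotallyBounded.exists_finset_norm_sub_starProjection_le {K : Set X}
    (hK : TotallyBounded K) {ε : ℝ} (hε : 0 < ε) :
    ∃ t : Finset X, (t : Set X) ⊆ K ∧
      ∀ u ∈ K, ‖u - (span 𝕜 (t : Set X)).starProjection u‖ ≤ ε := by
  obtain ⟨t, htK, htfin, hcover⟩ := finite_approx_of_totallyBounded hK ε hε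
  refine ⟨htfin.toFinset, by simpa using htK, fun u hu => ?_⟩
  obtain ⟨v, hvt, huv⟩ := mem_iUnion₂.1 (hcover hu)
  have hv : v ∈ span 𝕜 (htfin.toFinset : Set X) := subset_span (by simpa using hvt)
  calc ‖u - (span 𝕜 (htfin.toFinset : Set X)).starProjection u‖ ≤ ‖u - v‖ :=
        norm_sub_starProjection_le_of_mem _ u hv
    _ ≤ ε := (mem_ball_iff_norm.1 huv).le

variable {Z : Type*} [NormedAddCommGroup Z] [NormedSpace 𝕜 Z]

theorem LinearMap.bound_of_closedBall_bound {ε : ℝ} (f : Z →ₗ[𝕜] X)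
    (h : ∀ z ∈ closedBall (0 : Z) 1, ‖f z‖ ≤ ε) (z : Z) : ‖f z‖ ≤ ε * ‖z‖ := by
  rcases eq_or_ne z 0 with rfl | hz
  · simp
  have hz' : 0 < ‖z‖ := norm_pos_iff.2 hz
  set w : Z := ((‖z‖⁻¹ : ℝ) : 𝕜) • z
  have hw : w ∈ closedBall (0 : Z) 1 := by
    simp [w, norm_smul, hz'.ne']
  have hfz : f z = ((‖z‖ : ℝ) : 𝕜) • f w := by
    rw [← map_smul]
    simp [w, smul_smul, hz'.ne']
  rw [hfz, norm_smul, RCLike.norm_ofReal, abs_of_pos hz', mul_comm]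
  exact mul_le_mul_of_nonneg_right (h w hw) hz'.le

theorem LinearMap.exists_finset_norm_sub_starProjection_le (ι : Z →ₗ[𝕜] X)
    (hι : TotallyBounded (ι '' closedBall 0 1)) {ε : ℝ} (hε : 0 < ε) :
    ∃ t : Finset X, span 𝕜 (t : Set X) ≤ LinearMap.range ι ∧
      ∀ z, ‖ι z - (span 𝕜 (t : Set X)).starProjection (ι z)‖ ≤ ε * ‖z‖ := by
  obtain ⟨t, htι, happrox⟩ := hι.exists_finset_norm_sub_starProjection_le (𝕜 := 𝕜) hε
  refine ⟨t, span_le.2 fun u hu => ?_, fun z => ?_⟩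
  · obtain ⟨z, -, rfl⟩ := htι hu
    exact LinearMap.mem_range_self ι z
  set P := (span 𝕜 (t : Set X)).starProjection
  exact ((LinearMap.id - P.toLinearMap) ∘ₗ ι).bound_of_closedBall_bound
    (fun w hw => happrox _ (mem_image_of_mem ι hw)) z

end OrthogonalApproximation

section Statement16

variable {𝕜 : Type*} [RCLike 𝕜]
  {X : Type*} [NormedAddCommGroup X] [InnerProductSpace 𝕜 X] [CompleteSpace X]
  {Z : Type*} [NormedAddCommGroup Z] [NormedSpace 𝕜 Z]

theorem hilbert_smoothing_implies_ladyzhenskaya_general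
    (S : ℝ → X → X) (T : ℝ)
    (B : Set X)
    -- `Z` is a subspace of `X`, compactly embedded with embedding constant `c`
    (ι : Z →ₗ[𝕜] X)
    (c : ℝ) (hc : 0 < c) (hbd : ∀ z : Z, ‖ι z‖ ≤ c * ‖z‖)
    (hι_cpt : ∀ s : Set Z, IsBounded s → IsCompact (closure (ι '' s)))
    -- the smoothing property (case (i)): `S(T) = C(T) + M(T)` on `B`
    (C : X → X) (M : X → Z) (η κ : ℝ)
    (hdecomp : ∀ x ∈ B, S T x = C x + ι (M x))
    (hC : ∀ x ∈ B, ∀ y ∈ B, ‖C x - C y‖ ≤ η * ‖x - y‖)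
    (hM : ∀ x ∈ B, ∀ y ∈ B, ‖M x - M y‖ ≤ κ * ‖x - y‖) :
    ∀ ε : ℝ, 0 < ε → η + ε * κ < 1 →
      ∃ (n : ℕ) (Xn : Submodule 𝕜 X), Module.finrank 𝕜 Xn = n ∧
        (Xn : Set X) ⊆ Set.range ι ∧
        ∃ P : X → X,
          -- `P` is the orthogonal projection of `X` onto `Xₙ`
          (∀ x : X, P x ∈ Xn) ∧ (∀ x : X, x - P x ∈ Xnᗮ) ∧
          -- the semigroup is of Ladyzhenskaya type with parameters `(n, η+εκ, η+cκ)`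
          (∀ x ∈ B, ∀ y ∈ B,
            ‖(S T x - P (S T x)) - (S T y - P (S T y))‖ ≤ (η + ε * κ) * ‖x - y‖) ∧
          (∀ x ∈ B, ∀ y ∈ B,
            ‖P (S T x) - P (S T y)‖ ≤ (η + c * κ) * ‖x - y‖) := by
  intro ε hε _
  have hι_tb : TotallyBounded (ι '' closedBall 0 1) :=
    (hι_cpt _ isBounded_closedBall).totallyBounded.subset subset_closure
  obtain ⟨t, ht_range, happrox⟩ := ι.exists_finset_norm_sub_starProjection_le hι_tb hε
  set U := Submodule.span 𝕜 (t : Set X)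
  have hsplit : ∀ x ∈ B, ∀ y ∈ B, S T x - S T y = (C x - C y) + ι (M x - M y) := by
    intro x hx y hy
    rw [hdecomp x hx, hdecomp y hy, map_sub]
    abel
  refine ⟨_, U, rfl, fun u hu => ht_range hu, U.starProjection, U.starProjection_apply_mem,
    U.sub_starProjection_mem_orthogonal, fun x hx y hy => ?_, fun x hx y hy => ?_⟩
  · calc ‖(S T x - U.starProjection (S T x)) - (S T y - U.starProjection (S T y))‖
        = ‖(S T x - S T y) - U.starProjection (S T x - S T y)‖ := by rw [map_sub]; abel_nf
      _ ≤ ‖C x - C y‖ + ε * ‖M x - M y‖ := by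
        rw [hsplit x hx y hy]
        exact (U.norm_add_sub_starProjection_le _ _).trans (by gcongr; exact happrox _)
      _ ≤ η * ‖x - y‖ + ε * (κ * ‖x - y‖) := by
        gcongr
        exacts [hC x hx y hy, hM x hx y hy]
      _ = (η + ε * κ) * ‖x - y‖ := by ring
  · calc ‖U.starProjection (S T x) - U.starProjection (S T y)‖
        = ‖U.starProjection (S T x - S T y)‖ := by rw [map_sub]
      _ ≤ ‖C x - C y‖ + ‖ι (M x - M y)‖ := by
        rw [hsplit x hx y hy]
        exact (U.norm_starProjection_apply_le _).trans (norm_add_le _ _)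
      _ ≤ η * ‖x - y‖ + c * (κ * ‖x - y‖) :=
        add_le_add (hC x hx y hy) ((hbd _).trans (by gcongr; exact hM x hx y hy))
      _ = (η + c * κ) * ‖x - y‖ := by ring

theorem hilbert_smoothing_implies_ladyzhenskaya
    (V : Set X) (hV : V.Nonempty)
    (S : ℝ → X → X) (hS : IsSemiflowOn V S) (T : ℝ) (hT : 0 < T)
    (B : Set X) (hBV : B ⊆ V)
    -- `Z` is a subspace of `X`, compactly embedded with embedding constant `c`
    (ι : Z →ₗ[𝕜] X) (hι_inj : Function.Injective ι)
    (c : ℝ) (hc : 0 < c) (hbd : ∀ z : Z, ‖ι z‖ ≤ c * ‖z‖)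
    (hι_cpt : ∀ s : Set Z, IsBounded s → IsCompact (closure (ι '' s)))
    -- the smoothing property (case (i)): `S(T) = C(T) + M(T)` on `B`
    (C : X → X) (M : X → Z) (η κ : ℝ) (hη0 : 0 ≤ η) (hη1 : η < 1) (hκ : 0 < κ)
    (hdecomp : ∀ x ∈ B, S T x = C x + ι (M x))
    (hC : ∀ x ∈ B, ∀ y ∈ B, ‖C x - C y‖ ≤ η * ‖x - y‖)
    (hM : ∀ x ∈ B, ∀ y ∈ B, ‖M x - M y‖ ≤ κ * ‖x - y‖) :
    ∀ ε : ℝ, 0 < ε → η + ε * κ < 1 →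
      ∃ (n : ℕ) (Xn : Submodule 𝕜 X), Module.finrank 𝕜 Xn = n ∧
        (Xn : Set X) ⊆ Set.range ι ∧
        ∃ P : X → X,
          -- `P` is the orthogonal projection of `X` onto `Xₙ`
          (∀ x : X, P x ∈ Xn) ∧ (∀ x : X, x - P x ∈ Xnᗮ) ∧
          -- the semigroup is of Ladyzhenskaya type with parameters `(n, η+εκ, η+cκ)`
          (∀ x ∈ B, ∀ y ∈ B,
            ‖(S T x - P (S T x)) - (S T y - P (S T y))‖ ≤ (η + ε * κ) * ‖x - y‖) ∧
          (∀ x ∈ B, ∀ y ∈ B,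
            ‖P (S T x) - P (S T y)‖ ≤ (η + c * κ) * ‖x - y‖) :=
  hilbert_smoothing_implies_ladyzhenskaya_general S T B ι c hc hbd hι_cpt C M η κ hdecomp hC hM

end Statement16
end
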